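/- Let M be a Wall form, let N ≤ M be a sub-Wall form with r(N) ≥ g ≥ d, where d = d(H), and let f : W → M be a morphism of Wall forms. Then r(N ∩ f(W)^⊥) ≥ g − 2 − d. Similarly, if r̄(N) ≥ g, then r̄(N ∩ f(W)^⊥) ≥ g − 2 − d. -/

import Mathlib

/-!
Framework: `H`-pairs and Wall forms, following N. Perlmutter,
"Homological stability for the moduli spaces of products of spheres".

A form parameter `(G, ∂, π, ε)` is recorded together with the two
compatibility identities `∂(ε•h) = ∂(h)` and `π(∂(h)) = h + ε•h`, which hold
in the geometric situation considered in the paper and which are exactly the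
conditions needed for the standard Wall forms `W^g` to exist.
-/

section HPairs

/-- An `H`-pair: a pair of abelian groups together with a ℤ-bilinear
(i.e. biadditive) map `τ : M₋ × H → M₊`. -/
structure HPair (H : Type) [AddCommGroup H] where
  Neg : Type
  Pos : Type
  [negGrp : AddCommGroup Neg]
  [posGrp : AddCommGroup Pos]
  tau : Neg →+ H →+ Pos

attribute [instance] HPair.negGrp HPair.posGrp

variable {H : Type} [AddCommGroup H]

/-- An `H`-map of `H`-pairs. -/
structure HPairHom (M N : HPair H) where
  neg : M.Neg →+ N.Neg
  pos : M.Pos →+ N.Pos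
  comm : ∀ x h, pos (M.tau x h) = N.tau (neg x) h

/-- An isomorphism of `H`-pairs. -/
structure HPairIso (M N : HPair H) where
  toHom : HPairHom M N
  invHom : HPairHom N M
  left_neg : ∀ x, invHom.neg (toHom.neg x) = x
  right_neg : ∀ x, toHom.neg (invHom.neg x) = x
  left_pos : ∀ y, invHom.pos (toHom.pos y) = y
  right_pos : ∀ y, toHom.pos (invHom.pos y) = y

/-- An `H`-pair is finitely generated if both component groups are. -/
def HPair.FG (M : HPair H) : Prop :=
  AddGroup.FG M.Neg ∧ AddGroup.FG M.Pos

/-- The componentwise direct sum of two `H`-pairs. -/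
@[reducible] def HPair.sum (M N : HPair H) : HPair H where
  Neg := M.Neg × N.Neg
  Pos := M.Pos × N.Pos
  tau :=
    { toFun := fun x => (M.tau x.1).prod (N.tau x.2)
      map_zero' := by
        refine AddMonoidHom.ext fun h => ?_
        simp [Prod.ext_iff]
      map_add' := by
        intro x y
        refine AddMonoidHom.ext fun h => ?_
        simp [Prod.ext_iff] }

/-- The left inclusion `M → M ⊕ N`. -/
def HPairHom.inl (M N : HPair H) : HPairHom M (M.sum N) where
  neg := AddMonoidHom.inl M.Neg N.Neg
  pos := AddMonoidHom.inl M.Pos N.Pos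
  comm := by
    intro x h
    simp [HPair.sum, Prod.ext_iff]

/-- The right inclusion `N → M ⊕ N`. -/
def HPairHom.inr (M N : HPair H) : HPairHom N (M.sum N) where
  neg := AddMonoidHom.inr M.Neg N.Neg
  pos := AddMonoidHom.inr M.Pos N.Pos
  comm := by
    intro x h
    simp [HPair.sum, Prod.ext_iff]

/-- The `H`-pair `P⁰`, with `P⁰₋ = 0`, `P⁰₊ = ℤ` and `τ = 0`. -/
def P0 (H : Type) [AddCommGroup H] : HPair H where
  Neg := PUnit
  Pos := ℤ
  tau := 0

/-- The `H`-pair `P¹`, with `P¹₋ = ℤ`, `P¹₊ = H` and `τ(t, h) = t • h`. -/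
def P1 (H : Type) [AddCommGroup H] : HPair H where
  Neg := ℤ
  Pos := H
  tau := zmultiplesHom (H →+ H) (AddMonoidHom.id H)

/-- The generating-set length `d(H)`: the minimal `k` such that there is a
surjection `ℤ^k → H`. -/
noncomputable def dlen (H : Type) [AddCommGroup H] : ℕ :=
  sInf { k : ℕ | ∃ φ : (Fin k → ℤ) →+ H, Function.Surjective φ }

end HPairs

section WallForms

variable {H : Type} [AddCommGroup H]

/-- A form parameter `(G, ∂, π, ε)` for the category of `H`-pairs.  The two
compatibility identities `bd_eps` and `pi_bd` hold in the geometric setting of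
the paper and are needed for the standard Wall forms to exist. -/
structure FormParameter (H : Type) [AddCommGroup H] where
  G : HPair H
  bd : H →+ G.Pos
  pi : G.Pos →+ H
  eps : ℤ
  eps_pm : eps = 1 ∨ eps = -1
  bd_eps : ∀ h : H, bd (eps • h) = bd h
  pi_bd : ∀ h : H, pi (bd h) = h + eps • h

variable {P : FormParameter H}

/-- A Wall form structure (with parameter `P`) on the `H`-pair `C`. -/
structure WallAux (P : FormParameter H) (C : HPair H) where
  lam : C.Neg →+ C.Pos →+ ℤ
  mu : C.Pos →+ C.Pos →+ H
  alphaNeg : C.Neg →+ P.G.Neg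
  alphaPos : C.Pos → P.G.Pos
  mu_symm : ∀ y y', mu y y' = P.eps • mu y' y
  lam_tau : ∀ x x' h, lam x (C.tau x' h) = 0
  mu_tau : ∀ x h y, mu (C.tau x h) y = lam x y • h
  alphaPos_add : ∀ y y', alphaPos (y + y') = alphaPos y + alphaPos y' + P.bd (mu y y')
  mu_diag : ∀ y, mu y y = P.pi (alphaPos y)
  alphaPos_tau : ∀ x h, alphaPos (C.tau x h) = P.G.tau (alphaNeg x) h

/-- A Wall form with parameter `P`: a finitely generated `H`-pair together
with a Wall form structure. -/
structure WallForm (P : FormParameter H) where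
  carrier : HPair H
  fgNeg : AddGroup.FG carrier.Neg
  fgPos : AddGroup.FG carrier.Pos
  str : WallAux P carrier

/-- The property of an `H`-map to preserve all values of `λ`, `μ`, `α₋`, `α₊`. -/
def IsWallHom {C D : HPair H} (S : WallAux P C) (T : WallAux P D)
    (f : HPairHom C D) : Prop :=
  (∀ x y, T.lam (f.neg x) (f.pos y) = S.lam x y) ∧
  (∀ y y', T.mu (f.pos y) (f.pos y') = S.mu y y') ∧
  (∀ x, T.alphaNeg (f.neg x) = S.alphaNeg x) ∧
  (∀ y, T.alphaPos (f.pos y) = S.alphaPos y)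

/-- A morphism of Wall forms. -/
structure WallHom (M N : WallForm P) where
  hom : HPairHom M.carrier N.carrier
  isWall : IsWallHom M.str N.str hom

/-- An isomorphism of Wall forms: a morphism with a two-sided inverse morphism. -/
structure WallIso (M N : WallForm P) where
  toHom : WallHom M N
  invHom : WallHom N M
  left_neg : ∀ x, invHom.hom.neg (toHom.hom.neg x) = x
  right_neg : ∀ x, toHom.hom.neg (invHom.hom.neg x) = x
  left_pos : ∀ y, invHom.hom.pos (toHom.hom.pos y) = y
  right_pos : ∀ y, toHom.hom.pos (invHom.hom.pos y) = y

end WallForms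
section Extra

variable {H : Type} [AddCommGroup H] {P : FormParameter H}

/-- A subgroup of a finitely generated abelian group is finitely generated. -/
theorem addGroup_fg_subgroup {A : Type} [AddCommGroup A] (hA : AddGroup.FG A)
    (S : AddSubgroup A) : AddGroup.FG S := by
  haveI : Module.Finite ℤ A := Module.Finite.iff_addGroup_fg.mpr hA
  haveI : IsNoetherian ℤ A := isNoetherian_of_isNoetherianRing_of_finite ℤ A
  have h : (AddSubgroup.toIntSubmodule S).FG := IsNoetherian.noetherian _
  have h2 : Module.Finite ℤ (AddSubgroup.toIntSubmodule S) := Module.Finite.iff_fg.mpr h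
  exact Module.Finite.iff_addGroup_fg.mp h2

theorem addGroup_fg_of_module_finite {A : Type} [AddCommGroup A]
    [Module.Finite ℤ A] : AddGroup.FG A :=
  Module.Finite.iff_addGroup_fg.mp inferInstance

end Extra

section StdWall

variable {H : Type} [AddCommGroup H]

/-- The underlying `H`-pair of the standard Wall form of rank `g`:
`W^g₋ = ℤ^g` and `W^g₊ = ℤ^g × H^g`  (the first factor records the
`b`-coordinates, the second the `τ(a_i, -)`-coordinates). -/
@[reducible] def stdPair (H : Type) [AddCommGroup H] (g : ℕ) : HPair H where
  Neg := Fin g → ℤ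
  Pos := (Fin g → ℤ) × (Fin g → H)
  tau :=
    { toFun := fun x =>
        { toFun := fun h => (0, fun i => x i • h)
          map_zero' := by
            refine Prod.ext rfl ?_
            funext i
            simp
          map_add' := by
            intro h h'
            refine Prod.ext (by simp) ?_
            funext i
            simp [smul_add] }
      map_zero' := by
        refine AddMonoidHom.ext fun h => ?_
        refine Prod.ext rfl ?_
        funext i
        simp
      map_add' := by
        intro x x'
        refine AddMonoidHom.ext fun h => ?_
        refine Prod.ext (by simp) ?_
        funext i
        simp [add_smul] }

variable (P : FormParameter H)

/-- The standard Wall form `W^g` of rank `g` with parameter `P`. -/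
def stdWall [AddGroup.FG H] (g : ℕ) : WallForm P where
  carrier := stdPair H g
  fgNeg := by
    have : Module.Finite ℤ (Fin g → ℤ) := inferInstance
    exact addGroup_fg_of_module_finite
  fgPos := by
    haveI : Module.Finite ℤ H := Module.Finite.iff_addGroup_fg.mpr ‹AddGroup.FG H›
    have : Module.Finite ℤ ((Fin g → ℤ) × (Fin g → H)) := inferInstance
    exact addGroup_fg_of_module_finite
  str :=
    { lam :=
        { toFun := fun x =>
            { toFun := fun w => ∑ i, x i * w.1 i
              map_zero' := by simp
              map_add' := by
                intro w w'
                simp [mul_add, Finset.sum_add_distrib] }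
          map_zero' := by
            refine AddMonoidHom.ext fun w => ?_
            show (∑ i, (0 : Fin g → ℤ) i * w.1 i) = 0
            simp
          map_add' := by
            intro x x'
            refine AddMonoidHom.ext fun w => ?_
            simp [add_mul, Finset.sum_add_distrib] }
      mu :=
        { toFun := fun w =>
            { toFun := fun w' => (∑ i, w'.1 i • w.2 i) + P.eps • ∑ i, w.1 i • w'.2 i
              map_zero' := by simp
              map_add' := by
                intro w' w''
                simp only [Prod.fst_add, Prod.snd_add, Pi.add_apply, add_smul, smul_add,
                  Finset.sum_add_distrib]
                abel }
          map_zero' := by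
            refine AddMonoidHom.ext fun w' => ?_
            simp
          map_add' := by
            intro w w'
            refine AddMonoidHom.ext fun w'' => ?_
            simp only [Prod.fst_add, Prod.snd_add, Pi.add_apply, add_smul, smul_add,
              Finset.sum_add_distrib, AddMonoidHom.coe_mk, ZeroHom.coe_mk,
              AddMonoidHom.add_apply]
            abel }
      alphaNeg := 0
      alphaPos := fun w => P.bd (∑ i, w.1 i • w.2 i)
      mu_symm := by
        intro y y'
        have he : P.eps * P.eps = 1 := by
          rcases P.eps_pm with h | h <;> simp [h]
        show (∑ i, y'.1 i • y.2 i) + P.eps • ∑ i, y.1 i • y'.2 i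
            = P.eps • ((∑ i, y.1 i • y'.2 i) + P.eps • ∑ i, y'.1 i • y.2 i)
        rw [smul_add, smul_smul, he, one_smul, add_comm]
      lam_tau := by
        intro x x' h
        show (∑ i, x i * (0 : Fin _ → ℤ) i) = 0
        simp
      mu_tau := by
        intro x h y
        show (∑ i, y.1 i • (fun i => x i • h) i) + P.eps • ∑ i, (0 : Fin _ → ℤ) i • y.2 i
            = (∑ i, x i * y.1 i) • h
        simp only [Pi.zero_apply, zero_smul, Finset.sum_const_zero, smul_zero, add_zero]
        rw [Finset.sum_smul]
        congr 1
        funext i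
        rw [smul_smul, mul_comm]
      alphaPos_add := by
        intro y y'
        show P.bd (∑ i, (y.1 i + y'.1 i) • (y.2 i + y'.2 i))
            = P.bd (∑ i, y.1 i • y.2 i) + P.bd (∑ i, y'.1 i • y'.2 i)
              + P.bd ((∑ i, y'.1 i • y.2 i) + P.eps • ∑ i, y.1 i • y'.2 i)
        have expand : ∀ i : Fin _, (y.1 i + y'.1 i) • (y.2 i + y'.2 i)
            = (y.1 i • y.2 i + y'.1 i • y'.2 i) + (y'.1 i • y.2 i + y.1 i • y'.2 i) := by
          intro i
          rw [add_smul, smul_add, smul_add]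
          abel
        rw [Finset.sum_congr rfl fun i _ => expand i, Finset.sum_add_distrib,
          Finset.sum_add_distrib, Finset.sum_add_distrib, map_add, map_add, map_add, map_add,
          P.bd_eps]
      mu_diag := by
        intro y
        show (∑ i, y.1 i • y.2 i) + P.eps • ∑ i, y.1 i • y.2 i
            = P.pi (P.bd (∑ i, y.1 i • y.2 i))
        rw [P.pi_bd]
      alphaPos_tau := by
        intro x h
        show P.bd (∑ i, (0 : Fin _ → ℤ) i • (fun i => x i • h) i) = P.G.tau ((0 : _ →+ _) x) h
        simp }

variable {P}

/-- The `i`-th standard generator `a_i ∈ W^g₋`. -/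
def stdA [AddGroup.FG H] {g : ℕ} (i : Fin g) : (stdWall P g).carrier.Neg :=
  Pi.single i 1

/-- The `i`-th standard generator `b_i ∈ W^g₊`. -/
def stdB [AddGroup.FG H] {g : ℕ} (i : Fin g) : (stdWall P g).carrier.Pos :=
  (Pi.single i 1, 0)

end StdWall
section SubPairs

variable {H : Type} [AddCommGroup H] {P : FormParameter H}

/-- A sub-`H`-pair of the `H`-pair `C`. -/
structure SubPair (C : HPair H) where
  neg : AddSubgroup C.Neg
  pos : AddSubgroup C.Pos
  tau_mem : ∀ x ∈ neg, ∀ h, C.tau x h ∈ pos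

/-- The componentwise intersection of two sub-`H`-pairs. -/
def SubPair.inf {C : HPair H} (N N' : SubPair C) : SubPair C where
  neg := N.neg ⊓ N'.neg
  pos := N.pos ⊓ N'.pos
  tau_mem := fun x hx h => ⟨N.tau_mem x hx.1 h, N'.tau_mem x hx.2 h⟩

/-- The image of an `H`-map, as a sub-`H`-pair of the codomain. -/
def HPairHom.rangeSub {C D : HPair H} (f : HPairHom C D) : SubPair D where
  neg := f.neg.range
  pos := f.pos.range
  tau_mem := by
    rintro x ⟨a, rfl⟩ h
    exact ⟨C.tau a h, f.comm a h⟩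

/-- The kernel of an `H`-map, as a sub-`H`-pair of the domain. -/
def HPairHom.kerSub {C D : HPair H} (f : HPairHom C D) : SubPair C where
  neg := f.neg.ker
  pos := f.pos.ker
  tau_mem := by
    intro x hx h
    have hx' : f.neg x = 0 := hx
    have h2 : f.pos (C.tau x h) = D.tau (f.neg x) h := f.comm x h
    rw [hx'] at h2
    have h3 : f.pos (C.tau x h) = 0 := by
      rw [h2, map_zero, AddMonoidHom.zero_apply]
    exact h3

/-- The orthogonal complement of a sub-`H`-pair, with respect to a Wall form
structure `S` on the ambient `H`-pair. -/
def SubPair.perp {C : HPair H} (S : WallAux P C) (N : SubPair C) : SubPair C where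
  neg :=
    { carrier := { x | ∀ w ∈ N.pos, S.lam x w = 0 }
      add_mem' := by
        intro a b ha hb w hw
        rw [map_add, AddMonoidHom.add_apply, ha w hw, hb w hw, add_zero]
      zero_mem' := by
        intro w hw
        rw [map_zero, AddMonoidHom.zero_apply]
      neg_mem' := by
        intro a ha w hw
        rw [map_neg, AddMonoidHom.neg_apply, ha w hw, neg_zero] }
  pos :=
    { carrier := { y | (∀ v ∈ N.neg, S.lam v y = 0) ∧ ∀ w ∈ N.pos, S.mu y w = 0 }
      add_mem' := by
        intro a b ha hb
        refine ⟨fun v hv => ?_, fun w hw => ?_⟩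
        · rw [map_add, ha.1 v hv, hb.1 v hv, add_zero]
        · rw [map_add, AddMonoidHom.add_apply, ha.2 w hw, hb.2 w hw, add_zero]
      zero_mem' := by
        refine ⟨fun v hv => ?_, fun w hw => ?_⟩
        · rw [map_zero]
        · rw [map_zero, AddMonoidHom.zero_apply]
      neg_mem' := by
        intro a ha
        refine ⟨fun v hv => ?_, fun w hw => ?_⟩
        · rw [map_neg, ha.1 v hv, neg_zero]
        · rw [map_neg, AddMonoidHom.neg_apply, ha.2 w hw, neg_zero] }
  tau_mem := by
    intro x hx h
    refine ⟨fun v hv => S.lam_tau v x h, fun w hw => ?_⟩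
    rw [S.mu_tau x h w, hx w hw, zero_smul]

/-- Orthogonality of two sub-`H`-pairs with respect to a Wall form structure
`S`: trivial intersection and mutual containment in orthogonal complements. -/
def OrthogonalIn {C : HPair H} (S : WallAux P C) (N N' : SubPair C) : Prop :=
  N.neg ⊓ N'.neg = ⊥ ∧ N.pos ⊓ N'.pos = ⊥ ∧
  N.neg ≤ (N'.perp S).neg ∧ N.pos ≤ (N'.perp S).pos ∧
  N'.neg ≤ (N.perp S).neg ∧ N'.pos ≤ (N.perp S).pos

/-- The underlying `H`-pair of a sub-`H`-pair. -/
@[reducible] def SubPair.toPair {C : HPair H} (N : SubPair C) : HPair H where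
  Neg := N.neg
  Pos := N.pos
  tau :=
    { toFun := fun x =>
        { toFun := fun h => ⟨C.tau x h, N.tau_mem x x.2 h⟩
          map_zero' := by
            apply Subtype.ext
            simp
          map_add' := by
            intro h h'
            apply Subtype.ext
            simp }
      map_zero' := by
        refine AddMonoidHom.ext fun h => ?_
        apply Subtype.ext
        simp
      map_add' := by
        intro x x'
        refine AddMonoidHom.ext fun h => ?_
        apply Subtype.ext
        simp }

/-- The restriction of a Wall form structure to a sub-`H`-pair. -/
def SubPair.restrict {C : HPair H} (S : WallAux P C) (N : SubPair C) :
    WallAux P N.toPair where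
  lam :=
    { toFun := fun x => (S.lam (x : C.Neg)).comp N.pos.subtype
      map_zero' := by
        refine AddMonoidHom.ext fun y => ?_
        simp
      map_add' := by
        intro x x'
        refine AddMonoidHom.ext fun y => ?_
        simp }
  mu :=
    { toFun := fun y => (S.mu (y : C.Pos)).comp N.pos.subtype
      map_zero' := by
        refine AddMonoidHom.ext fun y => ?_
        simp
      map_add' := by
        intro y y'
        refine AddMonoidHom.ext fun y'' => ?_
        simp }
  alphaNeg := S.alphaNeg.comp N.neg.subtype
  alphaPos := fun y => S.alphaPos (y : C.Pos)
  mu_symm := fun y y' => S.mu_symm (y : C.Pos) y'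
  lam_tau := fun x x' h => S.lam_tau (x : C.Neg) x' h
  mu_tau := fun x h y => S.mu_tau (x : C.Neg) h y
  alphaPos_add := fun y y' => S.alphaPos_add (y : C.Pos) y'
  mu_diag := fun y => S.mu_diag (y : C.Pos)
  alphaPos_tau := fun x h => S.alphaPos_tau (x : C.Neg) h

/-- A sub-`H`-pair of (the carrier of) a Wall form is itself a Wall form, via
the restricted structure maps. -/
def SubPair.toWall {M : WallForm P} (N : SubPair M.carrier) : WallForm P where
  carrier := N.toPair
  fgNeg := addGroup_fg_subgroup M.fgNeg N.neg
  fgPos := addGroup_fg_subgroup M.fgPos N.pos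
  str := N.restrict M.str

end SubPairs
section SumAndRank

variable {H : Type} [AddCommGroup H] {P : FormParameter H}

/-- The orthogonal direct sum of two Wall forms. -/
def WallForm.sum (M N : WallForm P) : WallForm P where
  carrier := M.carrier.sum N.carrier
  fgNeg := by
    haveI : Module.Finite ℤ M.carrier.Neg := Module.Finite.iff_addGroup_fg.mpr M.fgNeg
    haveI : Module.Finite ℤ N.carrier.Neg := Module.Finite.iff_addGroup_fg.mpr N.fgNeg
    have : Module.Finite ℤ (M.carrier.Neg × N.carrier.Neg) := inferInstance
    exact Module.Finite.iff_addGroup_fg.mp this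
  fgPos := by
    haveI : Module.Finite ℤ M.carrier.Pos := Module.Finite.iff_addGroup_fg.mpr M.fgPos
    haveI : Module.Finite ℤ N.carrier.Pos := Module.Finite.iff_addGroup_fg.mpr N.fgPos
    have : Module.Finite ℤ (M.carrier.Pos × N.carrier.Pos) := inferInstance
    exact Module.Finite.iff_addGroup_fg.mp this
  str :=
    { lam :=
        { toFun := fun x => (M.str.lam x.1).coprod (N.str.lam x.2)
          map_zero' := by
            refine AddMonoidHom.ext fun y => ?_
            simp
          map_add' := by
            intro x x'
            refine AddMonoidHom.ext fun y => ?_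
            simp
            abel }
      mu :=
        { toFun := fun y => (M.str.mu y.1).coprod (N.str.mu y.2)
          map_zero' := by
            refine AddMonoidHom.ext fun y' => ?_
            simp
          map_add' := by
            intro y y'
            refine AddMonoidHom.ext fun y'' => ?_
            simp
            abel }
      alphaNeg := (M.str.alphaNeg).coprod (N.str.alphaNeg)
      alphaPos := fun y => M.str.alphaPos y.1 + N.str.alphaPos y.2
      mu_symm := by
        intro y y'
        show M.str.mu y.1 y'.1 + N.str.mu y.2 y'.2
            = P.eps • (M.str.mu y'.1 y.1 + N.str.mu y'.2 y.2)
        rw [smul_add, M.str.mu_symm y.1 y'.1, N.str.mu_symm y.2 y'.2]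
      lam_tau := by
        intro x x' h
        show M.str.lam x.1 (M.carrier.tau x'.1 h) + N.str.lam x.2 (N.carrier.tau x'.2 h) = 0
        rw [M.str.lam_tau, N.str.lam_tau, add_zero]
      mu_tau := by
        intro x h y
        show M.str.mu (M.carrier.tau x.1 h) y.1 + N.str.mu (N.carrier.tau x.2 h) y.2
            = (M.str.lam x.1 y.1 + N.str.lam x.2 y.2) • h
        rw [M.str.mu_tau, N.str.mu_tau, add_smul]
      alphaPos_add := by
        intro y y'
        show M.str.alphaPos (y.1 + y'.1) + N.str.alphaPos (y.2 + y'.2)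
            = (M.str.alphaPos y.1 + N.str.alphaPos y.2)
              + (M.str.alphaPos y'.1 + N.str.alphaPos y'.2)
              + P.bd (M.str.mu y.1 y'.1 + N.str.mu y.2 y'.2)
        rw [M.str.alphaPos_add, N.str.alphaPos_add, map_add]
        abel
      mu_diag := by
        intro y
        show M.str.mu y.1 y.1 + N.str.mu y.2 y.2
            = P.pi (M.str.alphaPos y.1 + N.str.alphaPos y.2)
        rw [map_add, M.str.mu_diag, N.str.mu_diag]
      alphaPos_tau := by
        intro x h
        show M.str.alphaPos (M.carrier.tau x.1 h) + N.str.alphaPos (N.carrier.tau x.2 h)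
            = P.G.tau (M.str.alphaNeg x.1 + N.str.alphaNeg x.2) h
        rw [M.str.alphaPos_tau, N.str.alphaPos_tau, map_add, AddMonoidHom.add_apply] }

variable [AddGroup.FG H]

/-- `rankGE M g` expresses the inequality `r(M) ≥ g` for the rank of a Wall
form: there exists a morphism of Wall forms `W^g → M`. -/
def rankGE (M : WallForm P) (g : ℕ) : Prop :=
  Nonempty (WallHom (stdWall P g) M)

/-- `srankGE M g` expresses the inequality `r̄(M) ≥ g` for the stable rank of
a Wall form: `r(M ⊕ W^j) ≥ g + j` for some `j`. -/
def srankGE (M : WallForm P) (g : ℕ) : Prop :=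
  ∃ j : ℕ, rankGE (M.sum (stdWall P j)) (g + j)

end SumAndRank

section Duality

variable {H : Type} [AddCommGroup H] {P : FormParameter H}

/-- The duality map `T⁰ : M₋ → Hom(M, P⁰)` of a Wall form. -/
def dualT0 (M : WallForm P) (v : M.carrier.Neg) : HPairHom M.carrier (P0 H) where
  neg := 0
  pos := M.str.lam v
  comm := by
    intro x h
    show M.str.lam v (M.carrier.tau x h) = ((P0 H).tau 0) h
    rw [M.str.lam_tau]
    show (0 : ℤ) = ((0 : _ →+ (H →+ ℤ)) 0) h
    rfl

/-- The duality map `T¹ : M₊ → Hom(M, P¹)` of a Wall form. -/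
def dualT1 (M : WallForm P) (w : M.carrier.Pos) : HPairHom M.carrier (P1 H) where
  neg := M.str.lam.flip w
  pos := M.str.mu.flip w
  comm := by
    intro x h
    show M.str.mu (M.carrier.tau x h) w = (P1 H).tau (M.str.lam x w) h
    rw [M.str.mu_tau]
    show M.str.lam x w • h = (M.str.lam x w • AddMonoidHom.id H) h
    simp

end Duality


/-!
A morphism `W^g → N` is a hyperbolic family `(aᵢ, bᵢ)` in `N`. For integer matrices `X, Y`
with `X Yᵀ = 1`, the vectors `a'ᵣ = ∑ Xᵣᵢ aᵢ`, `b'ᵣ = ∑ Yᵣᵢ bᵢ` again form a hyperbolic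
family, i.e. there is a morphism of standard forms `W^n → W^g`. With `u = f(a)` and `v = f(b)`,
such a family lies in `f(W)^⊥` as soon as `λ(a'ᵣ, v) = 0`, `λ(u, b'ᵣ) = 0` and `μ(b'ᵣ, v) = 0`,
i.e. `φ(Xᵣ) = 0` and `ψ(Yᵣ) = 0` for homomorphisms `φ : ℤ^g → ℤ` and `ψ : ℤ^g → ℤ × ℤ^d`, the
`H`-valued condition being lifted along a surjection `ℤ^d → H`. The kernel of a homomorphism
`ℤ^g → ℤ^e` is a direct summand of rank at least `g - e`; killing `φ` with the rows of `X` and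
then `ψ` with the rows of `Y` leaves `n = g - 1 - (1 + d)`. For the stable rank the same
argument runs in `M ⊕ W^j`, with `f` landing in the first summand.
-/

open Module Matrix

theorem AddMonoidHom.apply_eq_sum_single {k : ℕ} {A : Type*} [AddCommGroup A]
    (φ : (Fin k → ℤ) →+ A) (t : Fin k → ℤ) : φ t = ∑ i, t i • φ (Pi.single i 1) := by
  conv_lhs => rw [← Finset.univ_sum_single t]
  simp [map_sum, ← map_zsmul, ← Pi.single_smul']

theorem exists_dual_pair_of_ker {k : ℕ} {V : Type*} [AddCommGroup V] [Module.Free ℤ V]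
    [Module.Finite ℤ V] (φ : (Fin k → ℤ) →ₗ[ℤ] V) {n : ℕ} (hn : n ≤ k - finrank ℤ V) :
    ∃ X Y : Matrix (Fin n) (Fin k) ℤ, X * Yᵀ = 1 ∧ ∀ r, φ (X r) = 0 := by
  classical
  obtain ⟨s, hs⟩ := Module.projective_lifting_property φ.rangeRestrict LinearMap.id
    φ.surjective_rangeRestrict
  have hφs : ∀ x, φ (s x) = x := fun x => congrArg Subtype.val (LinearMap.congr_fun hs x)
  let π : (Fin k → ℤ) →ₗ[ℤ] LinearMap.ker φ :=
    (LinearMap.id - s ∘ₗ φ.rangeRestrict).codRestrict _ fun x => by simp [hφs]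
  have hπ : ∀ x : LinearMap.ker φ, π x = x := fun x => by
    have : φ.rangeRestrict x = 0 := Subtype.ext x.2
    ext1; simp [π, this]
  have hker : n ≤ finrank ℤ (LinearMap.ker φ) := by
    have := (LinearMap.ker φ).finrank_quotient_add_finrank
    rw [φ.quotKerEquivRange.finrank_eq, finrank_fin_fun] at this
    have := Submodule.finrank_le (LinearMap.range φ)
    omega
  let b := Module.finBasis ℤ (LinearMap.ker φ)
  let e := Fin.castLE hker
  refine ⟨.of fun r => b (e r), .of fun r j => b.coord (e r) (π (Pi.single j 1)), ?_,
    fun r => (b (e r)).2⟩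
  ext r t
  have hsum : ∀ x : Fin k → ℤ,
      ∑ j, x j * b.coord (e t) (π (Pi.single j 1)) = b.coord (e t) (π x) := fun x =>
    ((b.coord (e t) ∘ₗ π).toAddMonoidHom.apply_eq_sum_single x).symm
  rw [Matrix.mul_apply]
  simp only [transpose_apply, of_apply]
  rw [hsum, hπ, Basis.coord_apply, b.repr_self, Finsupp.single_apply, Matrix.one_apply]
  simp [e, Fin.castLE_inj]

theorem exists_dual_pair_of_ker₂ {k : ℕ} {V V' : Type*} [AddCommGroup V] [Module.Free ℤ V]
    [Module.Finite ℤ V] [AddCommGroup V'] [Module.Free ℤ V'] [Module.Finite ℤ V']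
    (φ : (Fin k → ℤ) →ₗ[ℤ] V) (ψ : (Fin k → ℤ) →ₗ[ℤ] V') {n : ℕ}
    (hn : n ≤ k - finrank ℤ V - finrank ℤ V') :
    ∃ X Y : Matrix (Fin n) (Fin k) ℤ, X * Yᵀ = 1 ∧ (∀ r, φ (X r) = 0) ∧ ∀ r, ψ (Y r) = 0 := by
  obtain ⟨X₁, Y₁, h₁, hX₁⟩ := exists_dual_pair_of_ker φ le_rfl
  obtain ⟨Y₂, X₂, h₂, hY₂⟩ := exists_dual_pair_of_ker (ψ ∘ₗ Y₁.vecMulLinear) hn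
  have h₂' : X₂ * Y₂ᵀ = 1 := by
    rw [← transpose_transpose X₂, ← transpose_mul, h₂, transpose_one]
  refine ⟨X₂ * X₁, Y₂ * Y₁, ?_, fun r => ?_, hY₂⟩
  · rw [transpose_mul, Matrix.mul_assoc, ← Matrix.mul_assoc X₁, h₁, Matrix.one_mul, h₂']
  · change φ (X₂ r ᵥ* X₁) = 0
    rw [vecMul_eq_sum, map_sum]
    exact Finset.sum_eq_zero fun s _ => by rw [map_smul, hX₁, smul_zero]

def Matrix.vecSMulHom {m n : Type*} [Fintype m] (A : Type*) [AddCommGroup A]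
    (X : Matrix m n ℤ) : (m → A) →+ (n → A) where
  toFun q j := ∑ r, X r j • q r
  map_zero' := by ext; simp
  map_add' q q' := by ext; simp [Finset.sum_add_distrib]

theorem Matrix.vecSMulHom_int {m n : Type*} [Fintype m] (Y : Matrix m n ℤ) (p : m → ℤ) :
    vecSMulHom ℤ Y p = Yᵀ *ᵥ p := by
  ext j
  simp [vecSMulHom, mulVec, dotProduct]

theorem Matrix.sum_smul_vecSMulHom {m n : Type*} [Fintype m] [Fintype n] {A : Type*}
    [AddCommGroup A] (X : Matrix m n ℤ) (v : n → ℤ) (q : m → A) :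
    ∑ j, v j • vecSMulHom A X q j = ∑ r, (X *ᵥ v) r • q r := by
  simp only [vecSMulHom, AddMonoidHom.coe_mk, ZeroHom.coe_mk, Finset.smul_sum, smul_smul]
  rw [Finset.sum_comm]
  simp [mulVec, dotProduct, Finset.sum_smul, mul_comm]

theorem Matrix.sum_vecSMulHom_smul_vecSMulHom {m n : Type*} [Fintype m] [Fintype n]
    [DecidableEq m] {A : Type*} [AddCommGroup A] {X Y : Matrix m n ℤ} (h : X * Yᵀ = 1)
    (p : m → ℤ) (q : m → A) :
    ∑ j, vecSMulHom ℤ Y p j • vecSMulHom A X q j = ∑ r, p r • q r := by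
  rw [sum_smul_vecSMulHom, vecSMulHom_int, mulVec_mulVec, h, one_mulVec]

theorem Matrix.sum_vecSMulHom_mul_vecSMulHom {m n : Type*} [Fintype m] [Fintype n]
    [DecidableEq m] {X Y : Matrix m n ℤ} (h : X * Yᵀ = 1) (t p : m → ℤ) :
    ∑ j, vecSMulHom ℤ X t j * vecSMulHom ℤ Y p j = ∑ r, t r * p r := by
  simp_rw [mul_comm (vecSMulHom ℤ X t _), ← smul_eq_mul, sum_vecSMulHom_smul_vecSMulHom h,
    smul_eq_mul, mul_comm]

theorem exists_surjective_dlen (H : Type) [AddCommGroup H] [AddGroup.FG H] :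
    ∃ ρ : (Fin (dlen H) → ℤ) →+ H, Function.Surjective ρ := by
  have : Module.Finite ℤ H := Module.Finite.iff_addGroup_fg.mpr ‹_›
  obtain ⟨n, ρ, hρ⟩ := Module.Finite.exists_fin' ℤ H
  have : {k | ∃ ρ : (Fin k → ℤ) →+ H, Function.Surjective ρ}.Nonempty :=
    ⟨n, ρ.toAddMonoidHom, hρ⟩
  exact Nat.sInf_mem this

noncomputable def AddMonoidHom.liftOfInjective {A B C : Type*} [AddGroup A] [AddGroup B]
    [AddGroup C] (ι : B →+ C) (hι : Function.Injective ι) (g : A →+ C) (h : g.range ≤ ι.range) :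
    A →+ B :=
  (AddMonoidHom.ofInjective hι).symm.toAddMonoidHom.comp (g.codRestrict _ fun x => h ⟨x, rfl⟩)

@[simp] theorem AddMonoidHom.apply_liftOfInjective {A B C : Type*} [AddGroup A] [AddGroup B]
    [AddGroup C] (ι : B →+ C) (hι : Function.Injective ι) (g : A →+ C) (h : g.range ≤ ι.range)
    (x : A) : ι (ι.liftOfInjective hι g h x) = g x := by
  rw [← AddMonoidHom.ofInjective_apply hι]
  exact congrArg Subtype.val ((AddMonoidHom.ofInjective hι).apply_symm_apply ⟨g x, h ⟨x, rfl⟩⟩)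

section Morphisms

variable {H : Type} [AddCommGroup H] {P : FormParameter H}

theorem WallAux.alphaPos_zero {C : HPair H} (S : WallAux P C) : S.alphaPos 0 = 0 := by
  simpa using S.alphaPos_add 0 0

def WallHom.id (M : WallForm P) : WallHom M M where
  hom := ⟨AddMonoidHom.id _, AddMonoidHom.id _, fun _ _ => rfl⟩
  isWall := ⟨fun _ _ => rfl, fun _ _ => rfl, fun _ => rfl, fun _ => rfl⟩

def WallHom.comp {M N K : WallForm P} (g : WallHom N K) (f : WallHom M N) : WallHom M K where
  hom :=
    { neg := g.hom.neg.comp f.hom.neg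
      pos := g.hom.pos.comp f.hom.pos
      comm := fun x h => by simp [f.hom.comm, g.hom.comm] }
  isWall :=
    ⟨fun x y => by simp [g.isWall.1, f.isWall.1], fun y y' => by simp [g.isWall.2.1, f.isWall.2.1],
      fun x => by simp [g.isWall.2.2.1, f.isWall.2.2.1],
      fun y => by simp [g.isWall.2.2.2, f.isWall.2.2.2]⟩

def WallHom.prodMap {M M' N N' : WallForm P} (f : WallHom M M') (g : WallHom N N') :
    WallHom (M.sum N) (M'.sum N') where
  hom :=
    { neg := f.hom.neg.prodMap g.hom.neg
      pos := f.hom.pos.prodMap g.hom.pos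
      comm := fun x h => Prod.ext (f.hom.comm x.1 h) (g.hom.comm x.2 h) }
  isWall :=
    ⟨fun x y => congrArg₂ (· + ·) (f.isWall.1 x.1 y.1) (g.isWall.1 x.2 y.2),
      fun y y' => congrArg₂ (· + ·) (f.isWall.2.1 y.1 y'.1) (g.isWall.2.1 y.2 y'.2),
      fun x => congrArg₂ (· + ·) (f.isWall.2.2.1 x.1) (g.isWall.2.2.1 x.2),
      fun y => congrArg₂ (· + ·) (f.isWall.2.2.2 y.1) (g.isWall.2.2.2 y.2)⟩

def SubPair.subtypeHom {M : WallForm P} (S : SubPair M.carrier) : WallHom S.toWall M where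
  hom := ⟨S.neg.subtype, S.pos.subtype, fun _ _ => rfl⟩
  isWall := ⟨fun _ _ => rfl, fun _ _ => rfl, fun _ => rfl, fun _ => rfl⟩

noncomputable def WallHom.liftOfInjective {X Y Z : WallForm P} (ι : WallHom Y Z)
    (hneg : Function.Injective ι.hom.neg) (hpos : Function.Injective ι.hom.pos)
    (G : WallHom X Z) (hGneg : G.hom.neg.range ≤ ι.hom.neg.range)
    (hGpos : G.hom.pos.range ≤ ι.hom.pos.range) : WallHom X Y where
  hom :=
    { neg := ι.hom.neg.liftOfInjective hneg G.hom.neg hGneg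
      pos := ι.hom.pos.liftOfInjective hpos G.hom.pos hGpos
      comm := fun x h => hpos (by
        rw [AddMonoidHom.apply_liftOfInjective, ι.hom.comm, AddMonoidHom.apply_liftOfInjective]
        exact G.hom.comm x h) }
  isWall :=
    ⟨fun x y => by rw [← ι.isWall.1]; simp [G.isWall.1],
      fun y y' => by rw [← ι.isWall.2.1]; simp [G.isWall.2.1],
      fun x => by rw [← ι.isWall.2.2.1]; simp [G.isWall.2.2.1],
      fun y => by rw [← ι.isWall.2.2.2]; simp [G.isWall.2.2.2]⟩

end Morphisms

section Standard

variable {H : Type} [AddCommGroup H] [AddGroup.FG H] {P : FormParameter H}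

theorem WallHom.neg_apply_eq_sum {M : WallForm P} {k : ℕ} (F : WallHom (stdWall P k) M)
    (t : (stdWall P k).carrier.Neg) : F.hom.neg t = ∑ i, t i • F.hom.neg (stdA i) :=
  AddMonoidHom.apply_eq_sum_single (F.hom.neg : (Fin k → ℤ) →+ M.carrier.Neg) t

theorem WallHom.pos_apply_eq_sum {M : WallForm P} {k : ℕ} (F : WallHom (stdWall P k) M)
    (w : (stdWall P k).carrier.Pos) :
    F.hom.pos w =
      ∑ i, (w.1 i • F.hom.pos (stdB i) + M.carrier.tau (F.hom.neg (stdA i)) (w.2 i)) := by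
  let b : (Fin k → ℤ) →+ M.carrier.Pos := F.hom.pos.comp (AddMonoidHom.inl (Fin k → ℤ) (Fin k → H))
  let c : (Fin k → H) →+ M.carrier.Pos := F.hom.pos.comp (AddMonoidHom.inr (Fin k → ℤ) (Fin k → H))
  obtain ⟨p, q⟩ := w
  have hw : F.hom.pos (p, q) = b p + c q := by
    change F.hom.pos (p, q) = F.hom.pos (p, 0) + F.hom.pos (0, q)
    rw [← F.hom.pos.map_add (p, 0) (0, q)]
    exact congrArg F.hom.pos (Prod.ext (add_zero p).symm (zero_add q).symm)
  have hc : ∀ i h, c (Pi.single i h) = M.carrier.tau (F.hom.neg (stdA i)) h := fun i h => by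
    rw [← F.hom.comm]
    refine congrArg F.hom.pos (Prod.ext rfl (funext fun j => ?_))
    change (Pi.single i h : Fin k → H) j = (Pi.single i 1 : Fin k → ℤ) j • h
    rcases eq_or_ne j i with rfl | hj <;> simp [*]
  have hq : c q = ∑ i, c (Pi.single i (q i)) := by rw [← map_sum, Finset.univ_sum_single]
  rw [hw, b.apply_eq_sum_single, hq, ← Finset.sum_add_distrib]
  simp only [hc]
  rfl

theorem WallHom.neg_range_le {M : WallForm P} {k : ℕ} (F : WallHom (stdWall P k) M)
    {S : SubPair M.carrier} (hA : ∀ i, F.hom.neg (stdA i) ∈ S.neg) : F.hom.neg.range ≤ S.neg := by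
  rintro _ ⟨t, rfl⟩
  rw [F.neg_apply_eq_sum]
  exact sum_mem fun i _ => zsmul_mem (hA i) _

theorem WallHom.pos_range_le {M : WallForm P} {k : ℕ} (F : WallHom (stdWall P k) M)
    {S : SubPair M.carrier} (hA : ∀ i, F.hom.neg (stdA i) ∈ S.neg)
    (hB : ∀ i, F.hom.pos (stdB i) ∈ S.pos) : F.hom.pos.range ≤ S.pos := by
  rintro _ ⟨w, rfl⟩
  rw [F.pos_apply_eq_sum]
  exact sum_mem fun i _ => add_mem (zsmul_mem (hB i) _) (S.tau_mem _ (hA i) _)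

theorem WallHom.mem_perp_rangeSub_neg {M : WallForm P} {k : ℕ} (f : WallHom (stdWall P k) M)
    {z : M.carrier.Neg} (hz : ∀ i, M.str.lam z (f.hom.pos (stdB i)) = 0) :
    z ∈ (f.hom.rangeSub.perp M.str).neg := by
  rintro _ ⟨w, rfl⟩
  rw [f.pos_apply_eq_sum]
  simp [hz, M.str.lam_tau]

theorem WallHom.mem_perp_rangeSub_pos {M : WallForm P} {k : ℕ} (f : WallHom (stdWall P k) M)
    {z : M.carrier.Pos} (hA : ∀ i, M.str.lam (f.hom.neg (stdA i)) z = 0)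
    (hB : ∀ i, M.str.mu z (f.hom.pos (stdB i)) = 0) :
    z ∈ (f.hom.rangeSub.perp M.str).pos := by
  have hτ : ∀ i h, M.str.mu z (M.carrier.tau (f.hom.neg (stdA i)) h) = 0 := fun i h => by
    rw [M.str.mu_symm, M.str.mu_tau, hA, zero_smul, smul_zero]
  refine ⟨?_, ?_⟩
  · rintro _ ⟨t, rfl⟩
    rw [f.neg_apply_eq_sum]
    simp [hA]
  · rintro _ ⟨w, rfl⟩
    rw [f.pos_apply_eq_sum]
    simp [hB, hτ]

def stdHom {n k : ℕ} (X Y : Matrix (Fin n) (Fin k) ℤ) (h : X * Yᵀ = 1) :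
    WallHom (stdWall P n) (stdWall P k) where
  hom :=
    { neg := vecSMulHom ℤ X
      pos := (vecSMulHom ℤ Y).prodMap (vecSMulHom H X)
      comm := fun t c => by
        refine Prod.ext (map_zero (vecSMulHom ℤ Y)) (funext fun j => ?_)
        change ∑ r, X r j • t r • c = (∑ r, X r j • t r) • c
        simp [Finset.sum_smul, mul_smul] }
  isWall :=
    ⟨fun t w => sum_vecSMulHom_mul_vecSMulHom h t w.1,
      fun w w' => congrArg₂ (· + P.eps • ·) (sum_vecSMulHom_smul_vecSMulHom h w'.1 w.2)
        (sum_vecSMulHom_smul_vecSMulHom h w.1 w'.2),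
      fun _ => rfl,
      fun w => congrArg P.bd (sum_vecSMulHom_smul_vecSMulHom h w.1 w.2)⟩

theorem stdHom_neg_stdA {n k : ℕ} {X Y : Matrix (Fin n) (Fin k) ℤ} (h : X * Yᵀ = 1) (r : Fin n) :
    (stdHom (P := P) X Y h).hom.neg (stdA r) = X r := by
  funext j
  change ∑ s, X s j • (Pi.single r 1 : Fin n → ℤ) s = X r j
  simp [Pi.single_apply]

theorem stdHom_pos_stdB {n k : ℕ} {X Y : Matrix (Fin n) (Fin k) ℤ} (h : X * Yᵀ = 1) (r : Fin n) :
    (stdHom (P := P) X Y h).hom.pos (stdB r) = ((Y r, 0) : (Fin k → ℤ) × (Fin k → H)) := by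
  refine Prod.ext (funext fun j => ?_) (funext fun j => ?_)
  · change ∑ s, Y s j • (Pi.single r 1 : Fin n → ℤ) s = Y r j
    simp [Pi.single_apply]
  · change ∑ s, X s j • (0 : H) = 0
    simp

end Standard

section Rank

variable {H : Type} [AddCommGroup H] [AddGroup.FG H] {P : FormParameter H}

theorem rankGE_zero (M : WallForm P) : rankGE M 0 :=
  ⟨{ hom := ⟨0, 0, fun _ _ => by simp⟩
     isWall :=
       ⟨fun x y => by
          change M.str.lam 0 0 = ∑ i : Fin 0, x i * y.1 i
          simp,
        fun y y' => by
          change M.str.mu 0 0 = ∑ i : Fin 0, y'.1 i • y.2 i + P.eps • ∑ i : Fin 0, y.1 i • y'.2 i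
          simp,
        fun _ => map_zero _,
        fun y => by
          change M.str.alphaPos 0 = P.bd (∑ i : Fin 0, y.1 i • y.2 i)
          simp [M.str.alphaPos_zero]⟩ }⟩

theorem rankGE_of_generators_mem_range {Y Z : WallForm P} {k : ℕ} (ι : WallHom Y Z)
    (hneg : Function.Injective ι.hom.neg) (hpos : Function.Injective ι.hom.pos)
    (G : WallHom (stdWall P k) Z) (hA : ∀ i, G.hom.neg (stdA i) ∈ ι.hom.neg.range)
    (hB : ∀ i, G.hom.pos (stdB i) ∈ ι.hom.pos.range) : rankGE Y k :=
  ⟨ι.liftOfInjective hneg hpos G (G.neg_range_le (S := ι.hom.rangeSub) hA)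
    (G.pos_range_le (S := ι.hom.rangeSub) hA hB)⟩

theorem exists_stdHom_perp {M : WallForm P} {k : ℕ} (F : WallHom (stdWall P k) M)
    (u : M.carrier.Neg) (v : M.carrier.Pos) :
    ∃ E : WallHom (stdWall P (k - 2 - dlen H)) (stdWall P k), ∀ r,
      M.str.lam (F.hom.neg (E.hom.neg (stdA r))) v = 0 ∧
      M.str.lam u (F.hom.pos (E.hom.pos (stdB r))) = 0 ∧
      M.str.mu (F.hom.pos (E.hom.pos (stdB r))) v = 0 := by
  obtain ⟨ρ, hρ⟩ := exists_surjective_dlen H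
  let b : (Fin k → ℤ) →+ M.carrier.Pos :=
    F.hom.pos.comp (AddMonoidHom.inl (Fin k → ℤ) (Fin k → H))
  obtain ⟨q, hq⟩ := Module.projective_lifting_property ρ.toIntLinearMap
    ((M.str.mu.flip v).comp b).toIntLinearMap hρ
  obtain ⟨X, Y, hXY, hX, hY⟩ := exists_dual_pair_of_ker₂
    ((M.str.lam.flip v).comp F.hom.neg).toIntLinearMap
    (((M.str.lam u).comp b).toIntLinearMap.prod q) (n := k - 2 - dlen H)
    (by simp only [finrank_self, finrank_prod, finrank_fin_fun]; omega)
  refine ⟨stdHom X Y hXY, fun r => ⟨?_, ?_, ?_⟩⟩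
  · rw [stdHom_neg_stdA]
    exact hX r
  · rw [stdHom_pos_stdB]
    exact congrArg Prod.fst (hY r)
  · rw [stdHom_pos_stdB]
    have hqY : q (Y r) = 0 := congrArg Prod.snd (hY r)
    calc M.str.mu (b (Y r)) v = ρ (q (Y r)) := (LinearMap.congr_fun hq (Y r)).symm
      _ = 0 := by rw [hqY, map_zero]

theorem rankGE_inf_perp {M : WallForm P} (N : SubPair M.carrier) (f : WallHom (stdWall P 1) M)
    {g : ℕ} (h : rankGE N.toWall g) :
    rankGE (N.inf (f.hom.rangeSub.perp M.str)).toWall (g - 2 - dlen H) := by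
  obtain ⟨F⟩ := h
  obtain ⟨E, hE⟩ := exists_stdHom_perp (N.subtypeHom.comp F) (f.hom.neg (stdA 0))
    (f.hom.pos (stdB 0))
  refine rankGE_of_generators_mem_range (N.inf _).subtypeHom Subtype.val_injective
    Subtype.val_injective ((N.subtypeHom.comp F).comp E) (fun r => ?_) (fun r => ?_)
  · exact ⟨⟨_, (F.hom.neg _).2, f.mem_perp_rangeSub_neg (Fin.forall_fin_one.2 (hE r).1)⟩, rfl⟩
  · exact ⟨⟨_, (F.hom.pos _).2, f.mem_perp_rangeSub_pos (Fin.forall_fin_one.2 (hE r).2.1)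
      (Fin.forall_fin_one.2 (hE r).2.2)⟩, rfl⟩

theorem srankGE_inf_perp {M : WallForm P} (N : SubPair M.carrier) (f : WallHom (stdWall P 1) M)
    {g : ℕ} (h : srankGE N.toWall g) :
    srankGE (N.inf (f.hom.rangeSub.perp M.str)).toWall (g - 2 - dlen H) := by
  obtain ⟨j, ⟨F⟩⟩ := h
  by_cases hg : g < 2 + dlen H
  · rw [Nat.sub_sub, Nat.sub_eq_zero_of_le hg.le]
    exact ⟨0, rankGE_zero _⟩
  let ιN := N.subtypeHom.prodMap (WallHom.id (stdWall P j))
  obtain ⟨E, hE⟩ := exists_stdHom_perp (ιN.comp F) (f.hom.neg (stdA 0), 0) (f.hom.pos (stdB 0), 0)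
  refine ⟨j, ?_⟩
  rw [show g - 2 - dlen H + j = g + j - 2 - dlen H by omega]
  refine rankGE_of_generators_mem_range
    ((N.inf (f.hom.rangeSub.perp M.str)).subtypeHom.prodMap (WallHom.id (stdWall P j)))
    (Subtype.val_injective.prodMap Function.injective_id)
    (Subtype.val_injective.prodMap Function.injective_id) ((ιN.comp F).comp E)
    (fun r => ?_) (fun r => ?_)
  · have h := (hE r).1
    change M.str.lam _ _ + (stdWall P j).str.lam _ 0 = 0 at h
    refine ⟨(⟨_, (F.hom.neg _).1.2, f.mem_perp_rangeSub_neg (Fin.forall_fin_one.2 ?_)⟩, _), rfl⟩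
    simp only [map_zero, add_zero] at h
    exact h
  · obtain ⟨h₁, h₂⟩ := (hE r).2
    change M.str.lam _ _ + (stdWall P j).str.lam 0 _ = 0 at h₁
    change M.str.mu _ _ + (stdWall P j).str.mu _ 0 = 0 at h₂
    refine ⟨(⟨_, (F.hom.pos _).1.2, f.mem_perp_rangeSub_pos (Fin.forall_fin_one.2 ?_)
      (Fin.forall_fin_one.2 ?_)⟩, _), rfl⟩
    · simp only [map_zero, AddMonoidHom.zero_apply, add_zero] at h₁
      exact h₁
    · simp only [map_zero, add_zero] at h₂
      exact h₂

end Rank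

theorem statement_15_general {H : Type} [AddCommGroup H] [AddGroup.FG H]
    (P : FormParameter H) (M : WallForm P) (N : SubPair M.carrier) (g : ℕ)
    (f : WallHom (stdWall P 1) M) :
    (rankGE N.toWall g →
      rankGE (N.inf (f.hom.rangeSub.perp M.str)).toWall (g - 2 - dlen H)) ∧
    (srankGE N.toWall g →
      srankGE (N.inf (f.hom.rangeSub.perp M.str)).toWall (g - 2 - dlen H)) :=
  ⟨rankGE_inf_perp N f, srankGE_inf_perp N f⟩

/-- For a sub-Wall form `N ≤ M` with `r(N) ≥ g ≥ d(H)` and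
a morphism `f : W → M`, one has `r(N ∩ f(W)^⊥) ≥ g - 2 - d`; similarly for
the stable rank. -/
theorem statement_15 {H : Type} [AddCommGroup H] [AddGroup.FG H]
    (P : FormParameter H) (M : WallForm P) (N : SubPair M.carrier) (g : ℕ)
    (hgd : dlen H ≤ g) (f : WallHom (stdWall P 1) M) :
    (rankGE N.toWall g →
      rankGE (N.inf (f.hom.rangeSub.perp M.str)).toWall (g - 2 - dlen H)) ∧
    (srankGE N.toWall g →
      srankGE (N.inf (f.hom.rangeSub.perp M.str)).toWall (g - 2 - dlen H)) :=
  statement_15_general P M N g f
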